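/- For every integer C ≥ 1 and every integer D, there exists a finite simple graph G with Δ(G) ≥ D, mad(G) < (4C + 2)/(C + 1), and χ²(G) ≥ Δ(G) + C + 1. -/

import Mathlib

open SimpleGraph

def SimpleGraph.square {V : Type*} (G : SimpleGraph V) : SimpleGraph V where
  Adj u v := u ≠ v ∧ (G.Adj u v ∨ ∃ w, G.Adj u w ∧ G.Adj w v)
  symm := by
    constructor
    rintro u v ⟨h, hadj | ⟨w, h1, h2⟩⟩
    · exact ⟨Ne.symm h, Or.inl hadj.symm⟩
    · exact ⟨Ne.symm h, Or.inr ⟨w, h2.symm, h1.symm⟩⟩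
  loopless := ⟨fun v h => h.1 rfl⟩

/-- `G` is list `k`-colorable. -/
def SimpleGraph.IsListColorable {V : Type*} (G : SimpleGraph V) (k : ℕ) : Prop :=
  ∀ L : V → Finset ℕ, (∀ v, (L v).card = k) →
    ∃ c : V → ℕ, (∀ v, c v ∈ L v) ∧ ∀ u v, G.Adj u v → c u ≠ c v

noncomputable def deg {V : Type*} (G : SimpleGraph V) (v : V) : ℕ :=
  (G.neighborSet v).ncard

noncomputable def maxDeg {V : Type*} [Fintype V] (G : SimpleGraph V) : ℕ :=
  Finset.univ.sup (deg G)

noncomputable def chi2l {V : Type*} (G : SimpleGraph V) : ℕ :=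
  sInf {k | (G.square).IsListColorable k}

def madLT {V : Type*} (G : SimpleGraph V) (m : ℝ) : Prop :=
  ∀ H : G.Subgraph, H.verts.Nonempty →
    2 * (H.edgeSet.ncard : ℝ) < m * (H.verts.ncard : ℝ)

/-!
Let `m = max C D` and take the graph on the vertices `w j` (`j ≤ C`), `z`, `u i` (`i < m`) and
`x i j` (`i < m`, `j < C`) with edges `w j — z`, `u i — w 0`, `u i — x i j` and `x i j — w (j+1)`.
Its maximum degree is `m + 1`, attained at `w 0`, and the `m + C + 2` vertices other than the
`x i j` are pairwise at distance at most two, so they form a clique in the square.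

For the density bound, every edge hands a charge `C + 1` to its endpoints: all of it to `w j` on
`w j — z`, to `u i` on `u i — w 0`, to `x i j` on `x i j — w (j+1)`, while `u i — x i j` gives `1`
to `u i` and `C` to `x i j`. Every vertex then receives at most `2C + 1`, and inside any nonempty
vertex set some vertex receives less: a hub vertex `w j` or `z` receives at most `C + 1`, and in
the absence of hub vertices `u i` and `x i j` receive at most `C`. Summing the charges of a
subgraph `H` gives `(C + 1) |E(H)| < (2C + 1) |V(H)|`.
-/

open Finset

namespace SimpleGraph

variable {V W : Type*} {G : SimpleGraph V} {G' : SimpleGraph W}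

lemma square_adj_of_adj {a b : V} (h : G.Adj a b) : G.square.Adj a b :=
  ⟨h.ne, .inl h⟩

lemma square_adj_of_adj_of_adj {a b c : V} (hac : a ≠ c) (hab : G.Adj a b) (hbc : G.Adj b c) :
    G.square.Adj a c :=
  ⟨hac, .inr ⟨b, hab, hbc⟩⟩

def Embedding.squareHom (f : G ↪g G') : G.square →g G'.square where
  toFun := f
  map_rel' := by
    rintro a b ⟨hab, h | ⟨c, hac, hcb⟩⟩
    · exact square_adj_of_adj (f.map_adj_iff.2 h)
    · exact square_adj_of_adj_of_adj (f.injective.ne hab) (f.map_adj_iff.2 hac)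
        (f.map_adj_iff.2 hcb)

lemma sum_sum_neighborFinset_eq_mul_card_edgeFinset [Fintype V] [DecidableRel G.Adj]
    (w : V → V → ℕ) {k : ℕ} (hw : ∀ a b, G.Adj a b → w a b + w b a = k) :
    ∑ a, ∑ b ∈ G.neighborFinset a, w a b = k * #G.edgeFinset := by
  have hswap : ∑ a, ∑ b ∈ G.neighborFinset a, w b a = ∑ a, ∑ b ∈ G.neighborFinset a, w a b := by
    simp only [neighborFinset_eq_filter, sum_filter]
    rw [sum_comm]
    simp only [G.adj_comm]
  have htwice : 2 * ∑ a, ∑ b ∈ G.neighborFinset a, w a b = k * (2 * #G.edgeFinset) :=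
    calc 2 * ∑ a, ∑ b ∈ G.neighborFinset a, w a b
        = ∑ a, ∑ b ∈ G.neighborFinset a, (w a b + w b a) := by
          simp only [sum_add_distrib, hswap]; ring
      _ = ∑ a, ∑ b ∈ G.neighborFinset a, k :=
          sum_congr rfl fun a _ => sum_congr rfl fun b hb =>
            hw a b ((mem_neighborFinset G a b).1 hb)
      _ = k * (2 * #G.edgeFinset) := by
          simp only [sum_const, card_neighborFinset_eq_degree, smul_eq_mul]
          rw [← sum_mul, sum_degrees_eq_twice_card_edges, mul_comm]
  linarith

end SimpleGraph

section

variable {V W : Type*} {G : SimpleGraph V} {G' : SimpleGraph W}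

lemma deg_eq_degree (v : V) [Fintype (G.neighborSet v)] :
    deg G v = G.degree v := by
  rw [deg, ← Nat.card_coe_set_eq, Nat.card_eq_fintype_card, card_neighborSet_eq_degree]

lemma maxDeg_eq_maxDegree [Fintype V] [DecidableRel G.Adj] : maxDeg G = G.maxDegree := by
  have hdeg : deg G = fun v => G.degree v := funext fun v => deg_eq_degree v
  rw [maxDeg, hdeg]
  exact le_antisymm (Finset.sup_le fun v _ => G.degree_le_maxDegree v)
    (G.maxDegree_le_of_forall_degree_le _ fun v =>
      Finset.le_sup (f := fun v => G.degree v) (mem_univ v))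

lemma madLT.of_iso {m : ℝ} (h : madLT G m) (e : G ≃g G') : madLT G' m := by
  intro H hH
  have hverts : (H.map e.symm.toHom).verts.ncard = H.verts.ncard :=
    Set.ncard_image_of_injective _ e.symm.injective
  have hedges : (H.map e.symm.toHom).edgeSet.ncard = H.edgeSet.ncard := by
    rw [Subgraph.edgeSet_map]
    exact Set.ncard_image_of_injective _ (Sym2.map.injective e.symm.injective)
  simpa only [hverts, hedges] using h (H.map e.symm.toHom) (hH.image _)

lemma madLT_of_charge [Fintype V] (w : V → V → ℕ) {k b : ℕ} (hk : 0 < k)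
    (hw : ∀ a b, G.Adj a b → w a b + w b a = k)
    (hS : ∀ S : Finset V, S.Nonempty → ∑ a ∈ S, ∑ b ∈ S, w a b < b * #S) :
    madLT G (2 * b / k) := by
  classical
  intro H hH
  set S := H.verts.toFinset
  have hcharge : k * H.edgeSet.ncard ≤ ∑ a ∈ S, ∑ b ∈ S, w a b :=
    calc k * H.edgeSet.ncard = ∑ a, ∑ b ∈ H.spanningCoe.neighborFinset a, w a b := by
          rw [sum_sum_neighborFinset_eq_mul_card_edgeFinset w fun a b h => hw a b (H.adj_sub h),
            ← Set.ncard_coe_finset, coe_edgeFinset, Subgraph.edgeSet_spanningCoe]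
      _ = ∑ a ∈ S, ∑ b ∈ H.spanningCoe.neighborFinset a, w a b := by
          refine (sum_subset (subset_univ S) fun a _ ha => sum_eq_zero fun b hb => ?_).symm
          exact absurd (H.edge_vert ((mem_neighborFinset _ a b).1 hb)) (by simpa [S] using ha)
      _ ≤ ∑ a ∈ S, ∑ b ∈ S, w a b :=
          sum_le_sum fun a _ => sum_le_sum_of_subset fun b hb =>
            Set.mem_toFinset.2 (H.edge_vert ((mem_neighborFinset _ a b).1 hb).symm)
  have hlt : (k : ℝ) * H.edgeSet.ncard < b * H.verts.ncard := by
    rw [Set.ncard_eq_toFinset_card' H.verts]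
    exact_mod_cast hcharge.trans_lt (hS S (Set.toFinset_nonempty.2 hH))
  rw [div_mul_eq_mul_div, lt_div_iff₀ (by exact_mod_cast hk)]
  linarith

end

namespace SparseSquareClique

variable (C m : ℕ)

abbrev Vertex := (Fin (C + 1) ⊕ Unit) ⊕ (Fin m ⊕ Fin m × Fin C)

variable {C m}

def w (j : Fin (C + 1)) : Vertex C m := .inl (.inl j)
def z : Vertex C m := .inl (.inr ())
def u (i : Fin m) : Vertex C m := .inr (.inl i)
def x (i : Fin m) (j : Fin C) : Vertex C m := .inr (.inr (i, j))

def arc : Vertex C m → Vertex C m → Prop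
  | .inl (.inl _), .inl (.inr _) => True
  | .inr (.inl _), .inl (.inl j) => j = 0
  | .inr (.inl i), .inr (.inr p) => p.1 = i
  | .inr (.inr p), .inl (.inl j) => j = p.2.succ
  | _, _ => False

variable (C m) in
def graph : SimpleGraph (Vertex C m) := SimpleGraph.fromRel arc

lemma adj_w_z (j : Fin (C + 1)) : (graph C m).Adj (w j) z := by simp [graph, arc, w, z]
lemma adj_u_w_zero (i : Fin m) : (graph C m).Adj (u i) (w 0) := by simp [graph, arc, w, u]
lemma adj_u_x (i : Fin m) (j : Fin C) : (graph C m).Adj (u i) (x i j) := by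
  simp [graph, arc, x, u]
lemma adj_x_w_succ (i : Fin m) (j : Fin C) : (graph C m).Adj (x i j) (w j.succ) := by
  simp [graph, arc, x, w]

lemma square_adj_w_u (j : Fin (C + 1)) (i : Fin m) : (graph C m).square.Adj (w j) (u i) := by
  refine Fin.cases ?_ (fun j => ?_) j
  · exact square_adj_of_adj (adj_u_w_zero i).symm
  · exact square_adj_of_adj_of_adj (by simp [w, u]) (adj_x_w_succ i j).symm (adj_u_x i j).symm

variable (C m) in
def hubAndU : Finset (Vertex C m) :=
  univ.map (Function.Embedding.sumMap (.refl _) .inl)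

lemma card_hubAndU : #(hubAndU C m) = m + C + 2 := by
  simp [hubAndU]; ring

lemma isClique_square_hubAndU :
    (graph C m).square.IsClique (hubAndU C m : Set (Vertex C m)) := by
  intro a ha b hb hab
  simp only [hubAndU, coe_map, coe_univ, Set.image_univ, Set.mem_range] at ha hb
  obtain ⟨(j | _) | i, rfl⟩ := ha <;> obtain ⟨(j' | _) | i', rfl⟩ := hb
  · exact square_adj_of_adj_of_adj hab (adj_w_z j) (adj_w_z j').symm
  · exact square_adj_of_adj (adj_w_z j)
  · exact square_adj_w_u j i'
  · exact square_adj_of_adj (adj_w_z j').symm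
  · exact absurd rfl hab
  · exact square_adj_of_adj_of_adj (by simp) (adj_w_z 0).symm (adj_u_w_zero i').symm
  · exact (square_adj_w_u j' i).symm
  · exact square_adj_of_adj_of_adj (by simp) (adj_u_w_zero i) (adj_w_z 0)
  · exact square_adj_of_adj_of_adj hab (adj_u_w_zero i) (adj_u_w_zero i').symm

lemma degree_le [DecidableRel (graph C m).Adj] (hCm : C ≤ m) (a : Vertex C m) :
    (graph C m).degree a ≤ m + 1 := by
  rw [← card_neighborFinset_eq_degree, neighborFinset_eq_filter, Finset.card_filter]
  rcases a with (j | _) | (i | ⟨i, j⟩)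
  · cases j using Fin.cases <;>
      simp only [graph, fromRel_adj, arc, Fintype.sum_sum_type, Fintype.sum_prod_type] <;>
      simp [fun k : Fin C => (Fin.succ_ne_zero k).symm, add_comm]
  all_goals
    simp only [graph, fromRel_adj, arc, Fintype.sum_sum_type, Fintype.sum_prod_type]
    simp
  · omega
  · omega
  · exact j.pos.trans_le hCm

lemma degree_w_zero [DecidableRel (graph C m).Adj] : (graph C m).degree (w 0) = m + 1 := by
  rw [← card_neighborFinset_eq_degree, neighborFinset_eq_filter, Finset.card_filter]
  simp only [graph, fromRel_adj, arc, w, Fintype.sum_sum_type, Fintype.sum_prod_type]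
  simp [fun k : Fin C => (Fin.succ_ne_zero k).symm, add_comm]

lemma maxDegree_graph [DecidableRel (graph C m).Adj] (hCm : C ≤ m) :
    (graph C m).maxDegree = m + 1 :=
  le_antisymm (maxDegree_le_of_forall_degree_le _ _ (degree_le hCm))
    (degree_w_zero.symm.trans_le (degree_le_maxDegree _ _))

def charge : Vertex C m → Vertex C m → ℕ
  | .inl (.inl _), .inl (.inr _) => C + 1
  | .inr (.inl _), .inl (.inl j) => if j = 0 then C + 1 else 0
  | .inr (.inl i), .inr (.inr p) => if p.1 = i then 1 else 0
  | .inr (.inr p), .inr (.inl i) => if p.1 = i then C else 0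
  | .inr (.inr p), .inl (.inl j) => if j = p.2.succ then C + 1 else 0
  | _, _ => 0

lemma charge_add_charge {a b : Vertex C m} (h : (graph C m).Adj a b) :
    charge a b + charge b a = C + 1 := by
  obtain ⟨-, h⟩ := h
  rcases a with (j | _) | (i | ⟨i, j⟩) <;> rcases b with (j' | _) | (i' | ⟨i', j'⟩) <;>
    simp_all [arc, charge, add_comm]

lemma sum_charge_le (a : Vertex C m) : ∑ b, charge a b ≤ 2 * C + 1 := by
  rcases a with (j | _) | (i | ⟨i, j⟩) <;>
    simp only [charge, Fintype.sum_sum_type, Fintype.sum_prod_type] <;>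
    simp [apply_ite Finset.card] <;> omega

lemma sum_charge_hub_le (a : Fin (C + 1) ⊕ Unit) :
    ∑ b, charge (.inl a : Vertex C m) b ≤ C + 1 := by
  rcases a with j | _ <;> simp [charge, Fintype.sum_sum_type]

lemma sum_charge_inr_le (a : Vertex C m) : ∑ b, charge a (.inr b) ≤ C := by
  rcases a with (j | _) | (i | ⟨i, j⟩) <;>
    simp only [charge, Fintype.sum_sum_type, Fintype.sum_prod_type] <;>
    simp [apply_ite Finset.card]

lemma exists_sum_charge_lt (hC : 1 ≤ C) {S : Finset (Vertex C m)} (hS : S.Nonempty) :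
    ∃ a ∈ S, ∑ b ∈ S, charge a b < 2 * C + 1 := by
  by_cases hhub : ∃ a, .inl a ∈ S
  · obtain ⟨a, ha⟩ := hhub
    refine ⟨_, ha, ?_⟩
    calc ∑ b ∈ S, charge (.inl a) b ≤ ∑ b, charge (.inl a : Vertex C m) b :=
          sum_le_sum_of_subset (subset_univ S)
      _ ≤ C + 1 := sum_charge_hub_le a
      _ < 2 * C + 1 := by omega
  · obtain ⟨a, ha⟩ := hS
    refine ⟨a, ha, ?_⟩
    have hsub : S ⊆ univ.map .inr := by
      intro b hb
      rcases b with b | b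
      · exact absurd ⟨b, hb⟩ hhub
      · exact mem_map_of_mem _ (mem_univ b)
    calc ∑ b ∈ S, charge a b ≤ ∑ b ∈ univ.map .inr, charge a b := sum_le_sum_of_subset hsub
      _ = ∑ b, charge a (.inr b) := sum_map _ _ _
      _ ≤ C := sum_charge_inr_le a
      _ < 2 * C + 1 := by omega

lemma madLT_graph (hC : 1 ≤ C) :
    madLT (graph C m) (((4 * C + 2 : ℕ) : ℝ) / ((C + 1 : ℕ) : ℝ)) := by
  have h := madLT_of_charge (G := graph C m) charge (Nat.succ_pos C)
    (fun a b hab => charge_add_charge hab) fun S hS =>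
      calc ∑ a ∈ S, ∑ b ∈ S, charge a b < ∑ a ∈ S, (2 * C + 1) :=
            sum_lt_sum (fun a _ => (sum_le_sum_of_subset (subset_univ S)).trans (sum_charge_le a))
              (exists_sum_charge_lt hC hS)
        _ = (2 * C + 1) * #S := by rw [sum_const, smul_eq_mul, mul_comm]
  convert h using 2
  push_cast
  ring

end SparseSquareClique

open SparseSquareClique in
theorem statement15 (C : ℕ) (hC : 1 ≤ C) (D : ℤ) :
    ∃ (n : ℕ) (G : SimpleGraph (Fin n)),
      D ≤ (maxDeg G : ℤ) ∧
      madLT G (((4 * C + 2 : ℕ) : ℝ) / ((C + 1 : ℕ) : ℝ)) ∧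
      (maxDeg G : ℕ∞) + C + 1 ≤ (G.square).chromaticNumber := by
  classical
  set m := max C D.toNat
  let e := (graph C m).overFinIso rfl
  have hΔ : maxDeg ((graph C m).overFin rfl) = m + 1 := by
    rw [maxDeg_eq_maxDegree, ← e.maxDegree_eq, maxDegree_graph (le_max_left _ _)]
  refine ⟨_, (graph C m).overFin rfl, ?_, (madLT_graph hC).of_iso e, ?_⟩
  · rw [hΔ]
    omega
  · calc (maxDeg ((graph C m).overFin rfl) : ℕ∞) + C + 1 = #(hubAndU C m) := by
          rw [hΔ, card_hubAndU]; push_cast; ring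
      _ ≤ (graph C m).square.chromaticNumber := isClique_square_hubAndU.card_le_chromaticNumber
      _ ≤ _ := chromaticNumber_mono_of_hom e.toEmbedding.squareHom
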